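/- The four two-qubit product states $|\tilde{\phi}_1\rangle = |+\rangle\otimes|-\rangle$, $|\tilde{\phi}_2\rangle = |-\rangle\otimes|-\rangle$, $|\tilde{\phi}_3\rangle = |1\rangle\otimes|0\rangle$, $|\tilde{\phi}_4\rangle = |0\rangle\otimes|0\rangle$, where $|\pm\rangle = (|0\rangle\pm|1\rangle)/\sqrt{2}$, form a basis of $\mathbb{C}^2\otimes\mathbb{C}^2$ with connected transition graph; moreover the CNOT gate maps each of these states to a product state. -/

import Mathlib

open scoped ComplexInnerProductSpace Matrix

namespace Stmt18

/-- `|+⟩ = (|0⟩ + |1⟩)/√2`. -/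
noncomputable def plus : Fin 2 → ℂ := fun _ => (((Real.sqrt 2)⁻¹ : ℝ) : ℂ)

/-- `|-⟩ = (|0⟩ - |1⟩)/√2`. -/
noncomputable def minus : Fin 2 → ℂ :=
  fun i => if i = 0 then (((Real.sqrt 2)⁻¹ : ℝ) : ℂ) else -(((Real.sqrt 2)⁻¹ : ℝ) : ℂ)

/-- `|0⟩` and `|1⟩`. -/
def ket (k : Fin 2) : Fin 2 → ℂ := fun i => if i = k then 1 else 0

/-- The four product test states `|+−⟩, |−−⟩, |10⟩, |00⟩`. -/
noncomputable def φ : Fin 4 → EuclideanSpace ℂ (Fin 2 × Fin 2)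
  | 0 => WithLp.toLp 2 fun p => plus p.1 * minus p.2
  | 1 => WithLp.toLp 2 fun p => minus p.1 * minus p.2
  | 2 => WithLp.toLp 2 fun p => ket 1 p.1 * ket 0 p.2
  | 3 => WithLp.toLp 2 fun p => ket 0 p.1 * ket 0 p.2

/-- The CNOT gate: `|c,t⟩ ↦ |c, t ⊕ c⟩`. -/
def CNOT : Matrix (Fin 2 × Fin 2) (Fin 2 × Fin 2) ℂ :=
  Matrix.of fun p q => if p.1 = q.1 ∧ p.2 = q.2 + q.1 then 1 else 0

/-- The transition graph of the family `φ`: `i, j` adjacent iff `⟪φ i, φ j⟫ ≠ 0`. -/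
noncomputable def transGraph : SimpleGraph (Fin 4) where
  Adj i j := i ≠ j ∧ ⟪φ i, φ j⟫ ≠ 0
  symm := ⟨by
    rintro i j ⟨hne, h⟩
    exact ⟨hne.symm, fun hz => h (inner_eq_zero_symm.mp hz)⟩⟩
  loopless := ⟨fun i h => h.1 rfl⟩

lemma s_sq : ((Real.sqrt 2 : ℝ) : ℂ)⁻¹ * ((Real.sqrt 2 : ℝ) : ℂ)⁻¹ = 1/2 := by
  rw [← mul_inv, ← Complex.ofReal_mul, Real.mul_self_sqrt (by norm_num)]
  norm_num

lemma s_ne : (((Real.sqrt 2)⁻¹ : ℝ) : ℂ) ≠ 0 := by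
  simp [Real.sqrt_eq_zero']

lemma lin_ind : LinearIndependent ℂ φ := by
  rw [Fintype.linearIndependent_iff]
  intro g h i
  have e : ∀ p : Fin 2 × Fin 2, ∑ j : Fin 4, g j * φ j p = 0 := by
    intro p
    have := congrArg (fun v => v.ofLp p) h
    simpa [Finset.sum_apply, PiLp.smul_apply, smul_eq_mul] using this
  have e00 := e (0,0); have e01 := e (0,1); have e10 := e (1,0); have e11 := e (1,1)
  simp [Fin.sum_univ_four, φ, plus, minus, ket] at e00 e01 e10 e11
  rw [s_sq] at e00 e01 e10 e11
  fin_cases i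
  · show g 0 = 0; linear_combination -e01 - e11
  · show g 1 = 0; linear_combination e11 - e01
  · show g 2 = 0; linear_combination e10 + e11
  · show g 3 = 0; linear_combination e00 + e01

lemma inner02 : ⟪φ 0, φ 2⟫ ≠ 0 := by
  have : ⟪φ 0, φ 2⟫ = (1/2 : ℂ) := by
    simp [PiLp.inner_apply, φ, Fintype.sum_prod_type, Fin.sum_univ_two, plus, minus, ket]
    rw [s_sq]; norm_num
  rw [this]; norm_num

lemma inner03 : ⟪φ 0, φ 3⟫ ≠ 0 := by
  have : ⟪φ 0, φ 3⟫ = (1/2 : ℂ) := by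
    simp [PiLp.inner_apply, φ, Fintype.sum_prod_type, Fin.sum_univ_two, plus, minus, ket]
    rw [s_sq]; norm_num
  rw [this]; norm_num

lemma inner12 : ⟪φ 1, φ 2⟫ ≠ 0 := by
  have : ⟪φ 1, φ 2⟫ = (-(1/2) : ℂ) := by
    simp [PiLp.inner_apply, φ, Fintype.sum_prod_type, Fin.sum_univ_two, plus, minus, ket]
    rw [s_sq]; norm_num
  rw [this]; norm_num

/-- The four states form a basis of `ℂ²⊗ℂ²` with connected transition graph, and CNOT maps
each of them to a product state: they form an entanglement-free MIS for CNOT. -/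
theorem CNOT_entanglement_free_MIS :
    LinearIndependent ℂ φ ∧
    Submodule.span ℂ (Set.range φ) = ⊤ ∧
    transGraph.Connected ∧
    ∀ i : Fin 4, ∃ a b : Fin 2 → ℂ,
      CNOT *ᵥ (φ i) = fun p : Fin 2 × Fin 2 => a p.1 * b p.2 := by
  refine ⟨lin_ind, ?_, ?_, ?_⟩
  · exact lin_ind.span_eq_top_of_card_eq_finrank (by simp [finrank_euclideanSpace])
  · rw [SimpleGraph.connected_iff]
    refine ⟨?_, inferInstance⟩
    have r02 : transGraph.Reachable 0 2 := (SimpleGraph.Adj.reachable (show (0:Fin 4) ≠ 2 ∧ ⟪φ 0, φ 2⟫ ≠ 0 from ⟨by decide, inner02⟩))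
    have r03 : transGraph.Reachable 0 3 := (SimpleGraph.Adj.reachable (show (0:Fin 4) ≠ 3 ∧ ⟪φ 0, φ 3⟫ ≠ 0 from ⟨by decide, inner03⟩))
    have r12 : transGraph.Reachable 1 2 := (SimpleGraph.Adj.reachable (show (1:Fin 4) ≠ 2 ∧ ⟪φ 1, φ 2⟫ ≠ 0 from ⟨by decide, inner12⟩))
    have r01 : transGraph.Reachable 0 1 := r02.trans r12.symm
    intro i j
    fin_cases i <;> fin_cases j
    · rfl
    · exact r01
    · exact r02
    · exact r03
    · exact r01.symm
    · rfl
    · exact r12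
    · exact r01.symm.trans r03
    · exact r02.symm
    · exact r12.symm
    · rfl
    · exact r02.symm.trans r03
    · exact r03.symm
    · exact r03.symm.trans r01
    · exact r03.symm.trans r02
    · rfl
  · intro i
    fin_cases i
    · refine ⟨minus, minus, ?_⟩
      funext p
      fin_cases p <;>
        simp [CNOT, Matrix.mulVec, dotProduct, Fintype.sum_prod_type,
          Fin.sum_univ_two, φ, plus, minus, ket]
    · refine ⟨plus, minus, ?_⟩
      funext p
      fin_cases p <;>
        simp [CNOT, Matrix.mulVec, dotProduct, Fintype.sum_prod_type,
          Fin.sum_univ_two, φ, plus, minus, ket]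
    · refine ⟨ket 1, ket 1, ?_⟩
      funext p
      fin_cases p <;>
        simp [CNOT, Matrix.mulVec, dotProduct, Fintype.sum_prod_type,
          Fin.sum_univ_two, φ, plus, minus, ket]
    · refine ⟨ket 0, ket 0, ?_⟩
      funext p
      fin_cases p <;>
        simp [CNOT, Matrix.mulVec, dotProduct, Fintype.sum_prod_type,
          Fin.sum_univ_two, φ, plus, minus, ket]


end Stmt18
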